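/- Suppose every module in Add(M) (direct summands of direct sums of copies of the S-module M) satisfies Ext¹_S(G, −) = 0 for all Gorenstein projective S-modules G. Then a complex E' of projective S-modules is totally acyclic if and only if e²_λ(E') (applying Y ↦ (0, Y)_0 termwise) is a totally acyclic complex of projective Γ-modules. -/

import Mathlib

open TensorProduct CategoryTheory

universe u
variable (R S M : Type) [CommRing R] [CommRing S]
  [AddCommGroup M] [Module R M] [Module S M] [SMulCommClass R S M]

/-- Modules over the triangular matrix ring Γ = [[R,0],[M,S]]: triples (X,Y,φ). -/
structure TriMod where
  X : Type
  Y : Type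
  [addX : AddCommGroup X]
  [modX : Module R X]
  [addY : AddCommGroup Y]
  [modY : Module S Y]
  phi : (M ⊗[R] X) →ₗ[S] Y

attribute [instance] TriMod.addX TriMod.modX TriMod.addY TriMod.modY

variable {R S M}

lemma lT_aux {X X' : Type} [AddCommGroup X] [Module R X] [AddCommGroup X'] [Module R X']
    (f : X →ₗ[R] X') (s : S) (t : M ⊗[R] X) :
    LinearMap.lTensor M f (s • t) = s • LinearMap.lTensor M f t := by
  induction t using TensorProduct.induction_on with
  | zero => simp
  | tmul m x => simp [TensorProduct.smul_tmul']
  | add a b ha hb => simp only [smul_add, map_add, ha, hb]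

/-- `M ⊗ f` as an `S`-linear map. -/
noncomputable def lT {X X' : Type} [AddCommGroup X] [Module R X] [AddCommGroup X'] [Module R X']
    (f : X →ₗ[R] X') : (M ⊗[R] X) →ₗ[S] (M ⊗[R] X') where
  toFun := LinearMap.lTensor M f
  map_add' := map_add _
  map_smul' s t := lT_aux f s t

@[simp] lemma lT_id {X : Type} [AddCommGroup X] [Module R X] :
    (lT (LinearMap.id : X →ₗ[R] X) : (M ⊗[R] X) →ₗ[S] (M ⊗[R] X)) = LinearMap.id := by
  apply LinearMap.ext; intro t
  simp [lT]

lemma lT_comp {X X' X'' : Type} [AddCommGroup X] [Module R X] [AddCommGroup X'] [Module R X']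
    [AddCommGroup X''] [Module R X''] (f : X →ₗ[R] X') (g : X' →ₗ[R] X'') :
    (lT (g ∘ₗ f) : (M ⊗[R] X) →ₗ[S] _) = (lT g) ∘ₗ (lT f) := by
  apply LinearMap.ext; intro t
  simp [lT, LinearMap.lTensor_comp]

@[simp] lemma lT_zero {X X' : Type} [AddCommGroup X] [Module R X] [AddCommGroup X'] [Module R X'] :
    (lT (0 : X →ₗ[R] X') : (M ⊗[R] X) →ₗ[S] (M ⊗[R] X')) = 0 := by
  apply LinearMap.ext; intro t
  simp [lT]

variable (R S M) in
@[ext] structure TriModHom (A B : TriMod R S M) where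
  f : A.X →ₗ[R] B.X
  g : A.Y →ₗ[S] B.Y
  comm : g ∘ₗ A.phi = B.phi ∘ₗ lT f

instance : Category (TriMod R S M) where
  Hom A B := TriModHom R S M A B
  id A := ⟨LinearMap.id, LinearMap.id, by simp⟩
  comp {A B C} u v := ⟨v.f ∘ₗ u.f, v.g ∘ₗ u.g, by
    rw [LinearMap.comp_assoc, u.comm, ← LinearMap.comp_assoc, v.comm, lT_comp,
      LinearMap.comp_assoc]⟩
  id_comp u := by apply TriModHom.ext <;> simp
  comp_id u := by apply TriModHom.ext <;> simp
  assoc u v w := by apply TriModHom.ext <;> simp [LinearMap.comp_assoc]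

instance instZeroHom (A B : TriMod R S M) : Zero (A ⟶ B) := ⟨⟨0, 0, by simp⟩⟩

@[simp] lemma zero_f (A B : TriMod R S M) : (0 : A ⟶ B).f = 0 := rfl
@[simp] lemma zero_g (A B : TriMod R S M) : (0 : A ⟶ B).g = 0 := rfl
@[simp] lemma comp_f {A B C : TriMod R S M} (u : A ⟶ B) (v : B ⟶ C) :
    (u ≫ v).f = v.f ∘ₗ u.f := rfl
@[simp] lemma comp_g {A B C : TriMod R S M} (u : A ⟶ B) (v : B ⟶ C) :
    (u ≫ v).g = v.g ∘ₗ u.g := rfl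
@[simp] lemma id_f (A : TriMod R S M) : TriModHom.f (𝟙 A) = LinearMap.id := rfl
@[simp] lemma id_g (A : TriMod R S M) : TriModHom.g (𝟙 A) = LinearMap.id := rfl

instance : Limits.HasZeroMorphisms (TriMod R S M) where
  comp_zero u C := by apply TriModHom.ext <;> simp
  zero_comp A {B C} u := by apply TriModHom.ext <;> simp
section Generic
open CategoryTheory Limits
variable {C : Type u} [Category.{v} C] [Limits.HasZeroMorphisms C]

/-- A complex of projectives is totally acyclic if it is acyclic and stays acyclic
under `Hom(-, P)` for every projective `P`. -/
def IsTotallyAcyclic (E : ChainComplex C ℤ) : Prop :=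
  (∀ i, Projective (E.X i)) ∧ (∀ i, E.ExactAt i) ∧
  ∀ (P : C), Projective P → ∀ (i : ℤ) (g : E.X i ⟶ P), E.d (i + 1) i ≫ g = 0 →
    ∃ h : E.X (i - 1) ⟶ P, E.d i (i - 1) ≫ h = g

/-- A complex of injectives is totally acyclic if it is acyclic and stays acyclic
under `Hom(I, -)` for every injective `I`. -/
def IsInjTotallyAcyclic (E : ChainComplex C ℤ) : Prop :=
  (∀ i, Injective (E.X i)) ∧ (∀ i, E.ExactAt i) ∧
  ∀ (I : C), Injective I → ∀ (i : ℤ) (g : I ⟶ E.X i), g ≫ E.d i (i - 1) = 0 →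
    ∃ h : I ⟶ E.X (i + 1), h ≫ E.d (i + 1) i = g

/-- An object is Gorenstein projective if it is a syzygy (a kernel of a differential)
of a totally acyclic complex of projectives. -/
def IsGorensteinProjective (G : C) : Prop :=
  ∃ (E : ChainComplex C ℤ), IsTotallyAcyclic E ∧
    ∃ (ι : G ⟶ E.X 0) (w : ι ≫ E.d 0 (-1) = 0),
      Nonempty (IsLimit (KernelFork.ofι ι w))

/-- An object is Gorenstein injective if it is a cosyzygy (a cokernel of a differential)
of a totally acyclic complex of injectives. -/
def IsGorensteinInjective (G : C) : Prop :=
  ∃ (E : ChainComplex C ℤ), IsInjTotallyAcyclic E ∧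
    ∃ (π : E.X 0 ⟶ G) (w : E.d 1 0 ≫ π = 0),
      Nonempty (IsColimit (CokernelCofork.ofπ π w))

end Generic

/-- `Ext¹_A(P, N) = 0`, phrased as: every extension of `P` by `N` splits. -/
def Ext1Vanishes (A : Type) [Ring A] (P N : Type) [AddCommGroup P] [Module A P]
    [AddCommGroup N] [Module A N] : Prop :=
  ∀ (D : Type) [AddCommGroup D] [Module A D] (i : N →ₗ[A] D) (p : D →ₗ[A] P),
    Function.Injective i → Function.Surjective p → Function.Exact i p →
    ∃ s : P →ₗ[A] D, p ∘ₗ s = LinearMap.id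

/-- A module is Gorenstein projective. -/
def ModGorensteinProjective (A : Type) [Ring A] (N : Type) [AddCommGroup N] [Module A N] :
    Prop := IsGorensteinProjective (ModuleCat.of A N)

/-- A module is Gorenstein injective. -/
def ModGorensteinInjective (A : Type) [Ring A] (N : Type) [AddCommGroup N] [Module A N] :
    Prop := IsGorensteinInjective (ModuleCat.of A N)
section Constructions
open CategoryTheory Limits
variable {R S M : Type} [CommRing R] [CommRing S]
  [AddCommGroup M] [Module R M] [Module S M] [SMulCommClass R S M]

variable (R S M) in
/-- The Γ-module `e¹_λ(X) = (X, M ⊗ X)_1`. -/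
noncomputable def e1obj (X : Type) [AddCommGroup X] [Module R X] : TriMod R S M :=
  ⟨X, M ⊗[R] X, LinearMap.id⟩

variable (R S M) in
/-- The Γ-module `e²_λ(Y) = (0, Y)_0`. -/
noncomputable def e2obj (Y : Type) [AddCommGroup Y] [Module S Y] : TriMod R S M :=
  ⟨PUnit, Y, 0⟩

variable (S M) in
/-- The complex `M ⊗[R] E` of `S`-modules obtained from a complex `E` of `R`-modules. -/
noncomputable def tensorComplex (E : ChainComplex (ModuleCat R) ℤ) :
    ChainComplex (ModuleCat S) ℤ where
  X i := ModuleCat.of S (M ⊗[R] E.X i)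
  d i j := ModuleCat.ofHom (lT (E.d i j).hom)
  shape i j h := by
    have h0 : (E.d i j).hom = 0 := by rw [E.shape i j h]; rfl
    apply ModuleCat.hom_ext
    rw [ModuleCat.hom_ofHom, h0, lT_zero]
    rfl
  d_comp_d' i j k _ _ := by
    have h0 : ((E.d j k).hom ∘ₗ (E.d i j).hom) = 0 := by
      rw [← ModuleCat.hom_comp, E.d_comp_d]; rfl
    apply ModuleCat.hom_ext
    rw [ModuleCat.hom_comp, ModuleCat.hom_ofHom, ModuleCat.hom_ofHom, ← lT_comp, h0, lT_zero]
    rfl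

variable (R S M) in
/-- Condition (1): `M ⊗[R] -` takes acyclic complexes of projective `R`-modules to
acyclic complexes of `S`-modules. -/
def Cond1 : Prop :=
  ∀ (E : ChainComplex (ModuleCat R) ℤ),
    (∀ i, Module.Projective R (E.X i)) → (∀ i, E.ExactAt i) →
    ∀ i, (tensorComplex S M E).ExactAt i

variable (S M) in
/-- `N` lies in `Add(M)`: it is a direct summand of a direct sum of copies of `M`. -/
def MemAdd (N : Type) [AddCommGroup N] [Module S N] : Prop :=
  ∃ (I : Type) (ι : N →ₗ[S] (I →₀ M)) (p : (I →₀ M) →ₗ[S] N), p ∘ₗ ι = LinearMap.id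

variable (R S M) in
/-- Condition (2): `Add(M) ⊆ GProj(S)ᗮ`. -/
def Cond2 : Prop :=
  ∀ (N : Type) [AddCommGroup N] [Module S N], MemAdd S M N →
    ∀ (G : Type) [AddCommGroup G] [Module S G],
      ModGorensteinProjective S G → Ext1Vanishes S G N

end Constructions
section MoreConstructions
open CategoryTheory Limits
variable {R S M : Type} [CommRing R] [CommRing S]
  [AddCommGroup M] [Module R M] [Module S M] [SMulCommClass R S M]

variable (R S M) in
/-- Termwise application of `e¹_λ` to a complex of `R`-modules. -/
noncomputable def e1c (E : ChainComplex (ModuleCat R) ℤ) : ChainComplex (TriMod R S M) ℤ where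
  X i := e1obj R S M (E.X i)
  d i j := ⟨(E.d i j).hom, lT (E.d i j).hom, by
    show lT (E.d i j).hom ∘ₗ LinearMap.id = LinearMap.id ∘ₗ _
    (try simp) <;> rfl⟩
  shape i j h := by
    have h0 : (E.d i j).hom = 0 := by rw [E.shape i j h]; rfl
    apply TriModHom.ext <;> (try simp [h0]) <;> rfl
  d_comp_d' i j k _ _ := by
    have h0 : ((E.d j k).hom ∘ₗ (E.d i j).hom) = 0 := by
      rw [← ModuleCat.hom_comp, E.d_comp_d]; rfl
    apply TriModHom.ext <;> dsimp only [comp_f, comp_g]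
    · exact h0
    · show lT (E.d j k).hom ∘ₗ lT (E.d i j).hom = _
      rw [← lT_comp, h0, lT_zero]; rfl

variable (R S M) in
/-- Termwise application of `e²_λ` to a complex of `S`-modules. -/
noncomputable def e2c (E : ChainComplex (ModuleCat S) ℤ) : ChainComplex (TriMod R S M) ℤ where
  X i := e2obj R S M (E.X i)
  d i j := ⟨0, (E.d i j).hom, by
    show (E.d i j).hom ∘ₗ (0 : (M ⊗[R] PUnit) →ₗ[S] _) = _
    (try simp) <;> rfl⟩
  shape i j h := by
    have h0 : (E.d i j).hom = 0 := by rw [E.shape i j h]; rfl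
    apply TriModHom.ext <;> (try simp [h0]) <;> rfl
  d_comp_d' i j k _ _ := by
    have h0 : ((E.d j k).hom ∘ₗ (E.d i j).hom) = 0 := by
      rw [← ModuleCat.hom_comp, E.d_comp_d]; rfl
    apply TriModHom.ext <;> dsimp only [comp_f, comp_g]
    · simp
    · exact h0

variable (R S M) in
/-- The complex of first components of a complex of Γ-modules. -/
noncomputable def compA (E : ChainComplex (TriMod R S M) ℤ) : ChainComplex (ModuleCat R) ℤ where
  X i := ModuleCat.of R (E.X i).X
  d i j := ModuleCat.ofHom (E.d i j).f
  shape i j h := by rw [E.shape i j h]; rfl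
  d_comp_d' i j k _ _ := by
    have h0 := congrArg TriModHom.f (E.d_comp_d i j k)
    simp only [comp_f, zero_f] at h0
    apply ModuleCat.hom_ext
    exact h0

lemma range_le_comap {A B : TriMod R S M} (u : A ⟶ B) :
    LinearMap.range A.phi ≤ (LinearMap.range B.phi).comap u.g := by
  rintro y ⟨t, rfl⟩
  exact ⟨lT u.f t, (LinearMap.congr_fun u.comm t).symm⟩

variable (R S M) in
/-- The complex `Coker E` of the cokernels of the structure maps of a complex of
Γ-modules. -/
noncomputable def cokerC (E : ChainComplex (TriMod R S M) ℤ) : ChainComplex (ModuleCat S) ℤ where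
  X i := ModuleCat.of S ((E.X i).Y ⧸ LinearMap.range (E.X i).phi)
  d i j := ModuleCat.ofHom (Submodule.mapQ _ _ (E.d i j).g (range_le_comap (E.d i j)))
  shape i j h := by
    apply ModuleCat.hom_ext
    apply LinearMap.ext; intro x
    obtain ⟨y, rfl⟩ := Submodule.Quotient.mk_surjective _ x
    rw [ModuleCat.hom_ofHom]
    rw [Submodule.mapQ_apply, E.shape i j h]
    rfl
  d_comp_d' i j k _ _ := by
    apply ModuleCat.hom_ext
    apply LinearMap.ext; intro x
    obtain ⟨y, rfl⟩ := Submodule.Quotient.mk_surjective _ x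
    have h0 := congrArg TriModHom.g (E.d_comp_d i j k)
    simp only [comp_g, zero_g] at h0
    show Submodule.Quotient.mk ((E.d j k).g ((E.d i j).g y)) = 0
    rw [← LinearMap.comp_apply, h0]
    rfl

end MoreConstructions
section HomModule
open CategoryTheory Limits
variable {R S M : Type} [CommRing R] [CommRing S]
  [AddCommGroup M] [Module R M] [Module S M] [SMulCommClass R S M]

variable (S M) in
/-- Scalar multiplication by `r : R` on `M`, as an `S`-linear map. -/
def rsmulM (r : R) : M →ₗ[S] M where
  toFun m := r • m
  map_add' := smul_add r
  map_smul' s m := (smul_comm r s m)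

/-- The right `R`-module structure on `Hom_S(M, Y)` coming from the `R`-action on `M`. -/
instance homRModule (Y : Type) [AddCommGroup Y] [Module S Y] : Module R (M →ₗ[S] Y) where
  smul r f := f ∘ₗ rsmulM S M r
  one_smul f := by
    apply LinearMap.ext; intro m
    show f ((1 : R) • m) = f m
    rw [one_smul]
  mul_smul r r' f := by
    apply LinearMap.ext; intro m
    show f ((r * r') • m) = f (r' • r • m)
    rw [mul_comm, mul_smul]
  smul_zero r := by apply LinearMap.ext; intro m; rfl
  smul_add r f g := by apply LinearMap.ext; intro m; rfl
  add_smul r r' f := by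
    apply LinearMap.ext; intro m
    show f ((r + r') • m) = f (r • m) + f (r' • m)
    rw [add_smul, map_add]
  zero_smul f := by
    apply LinearMap.ext; intro m
    show f ((0 : R) • m) = 0
    rw [zero_smul, map_zero]

@[simp] lemma homRModule_smul_apply {Y : Type} [AddCommGroup Y] [Module S Y]
    (r : R) (f : M →ₗ[S] Y) (m : M) : (r • f) m = f (r • m) := rfl

/-- Postcomposition `Hom_S(M, g)`, as an `R`-linear map. -/
def hT {Y Y' : Type} [AddCommGroup Y] [Module S Y] [AddCommGroup Y'] [Module S Y']
    (g : Y →ₗ[S] Y') : (M →ₗ[S] Y) →ₗ[R] (M →ₗ[S] Y') where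
  toFun f := g ∘ₗ f
  map_add' f f' := by apply LinearMap.ext; intro m; simp
  map_smul' r f := rfl

@[simp] lemma hT_zero {Y Y' : Type} [AddCommGroup Y] [Module S Y] [AddCommGroup Y']
    [Module S Y'] : hT (R := R) (M := M) (0 : Y →ₗ[S] Y') = 0 := by
  apply LinearMap.ext; intro f; apply LinearMap.ext; intro m; rfl

lemma hT_comp {Y Y' Y'' : Type} [AddCommGroup Y] [Module S Y] [AddCommGroup Y']
    [Module S Y'] [AddCommGroup Y''] [Module S Y''] (g : Y →ₗ[S] Y') (g' : Y' →ₗ[S] Y'') :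
    hT (R := R) (M := M) (g' ∘ₗ g) = (hT g') ∘ₗ (hT g) := by
  apply LinearMap.ext; intro f; apply LinearMap.ext; intro m; rfl

variable (R M) in
/-- The complex `Hom_S(M, E)` of `R`-modules obtained from a complex `E` of `S`-modules. -/
noncomputable def homComplex (E : ChainComplex (ModuleCat S) ℤ) :
    ChainComplex (ModuleCat R) ℤ where
  X i := ModuleCat.of R (M →ₗ[S] E.X i)
  d i j := ModuleCat.ofHom (hT (E.d i j).hom : _ →ₗ[R] _)
  shape i j h := by
    have h0 : (E.d i j).hom = 0 := by rw [E.shape i j h]; rfl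
    apply ModuleCat.hom_ext
    rw [ModuleCat.hom_ofHom, h0, hT_zero]
    rfl
  d_comp_d' i j k _ _ := by
    have h0 : ((E.d j k).hom ∘ₗ (E.d i j).hom) = 0 := by
      rw [← ModuleCat.hom_comp, E.d_comp_d]; rfl
    apply ModuleCat.hom_ext
    show (hT (R := R) (M := M) (E.d j k).hom) ∘ₗ
      (hT (R := R) (M := M) (E.d i j).hom) = 0
    rw [← hT_comp, h0, hT_zero]

variable (R S M) in
/-- Condition (3): `Hom_S(M, -)` takes acyclic complexes of injective `S`-modules to
acyclic complexes of `R`-modules. -/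
def Cond3 : Prop :=
  ∀ (E : ChainComplex (ModuleCat S) ℤ),
    (∀ i, Module.Injective S (E.X i)) → (∀ i, E.ExactAt i) →
    ∀ i, (homComplex R M E).ExactAt i

variable (R S M) in
/-- Condition (4): `Hom_S(M, I) ∈ ᗮGInj(R)` for every injective `S`-module `I`. -/
def Cond4 : Prop :=
  ∀ (I : Type) [AddCommGroup I] [Module S I], Module.Injective S I →
    ∀ (G : Type) [AddCommGroup G] [Module R G],
      ModGorensteinInjective R G → Ext1Vanishes R (M →ₗ[S] I) G

variable (S M) in
/-- The evaluation map `M ⊗_R Hom_S(M, Y) → Y` as an additive map. -/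
noncomputable def evMapAdd (Y : Type) [AddCommGroup Y] [Module S Y] :
    (M ⊗[R] (M →ₗ[S] Y)) →+ Y :=
  TensorProduct.liftAddHom
    (AddMonoidHom.mk' (fun m => AddMonoidHom.mk' (fun f : M →ₗ[S] Y => f m)
      (fun f g => rfl)) (fun m m' => by
        apply AddMonoidHom.ext; intro f; exact f.map_add m m'))
    (fun r m f => by show f (r • m) = (r • f) m; rfl)

lemma evMapAdd_smul {Y : Type} [AddCommGroup Y] [Module S Y] (s : S)
    (t : M ⊗[R] (M →ₗ[S] Y)) : evMapAdd S M Y (s • t) = s • evMapAdd S M Y t := by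
  induction t using TensorProduct.induction_on with
  | zero => simp
  | tmul m f =>
    rw [TensorProduct.smul_tmul']
    show (f : M →ₗ[S] Y) (s • m) = s • f m
    exact f.map_smul s m
  | add a b ha hb => simp only [map_add, smul_add, ha, hb]

variable (S M) in
/-- The evaluation map `M ⊗_R Hom_S(M, Y) → Y`. -/
noncomputable def evMap (Y : Type) [AddCommGroup Y] [Module S Y] :
    (M ⊗[R] (M →ₗ[S] Y)) →ₗ[S] Y where
  toFun := evMapAdd S M Y
  map_add' := map_add _
  map_smul' := evMapAdd_smul

variable (R S M) in
/-- The Γ-module `e²_ρ(Y) = (Hom_S(M,Y), Y)_1`. -/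
noncomputable def e2rhoObj (Y : Type) [AddCommGroup Y] [Module S Y] : TriMod R S M :=
  ⟨M →ₗ[S] Y, Y, evMap S M Y⟩

end HomModule
section Functors
open CategoryTheory Limits
variable (R S M : Type) [CommRing R] [CommRing S]
  [AddCommGroup M] [Module R M] [Module S M] [SMulCommClass R S M]

/-- The evaluation functor `e¹ : Mod Γ → Mod R`, `(X,Y)_φ ↦ X`. -/
noncomputable def ev1 : TriMod R S M ⥤ ModuleCat R where
  obj A := ModuleCat.of R A.X
  map u := ModuleCat.ofHom u.f
  map_id A := rfl
  map_comp u v := rfl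

/-- The functor `e¹_λ : Mod R → Mod Γ`, `X ↦ (X, M ⊗ X)_1`. -/
noncomputable def e1fun : ModuleCat R ⥤ TriMod R S M where
  obj X := e1obj R S M X
  map {X X'} f := ⟨f.hom, lT f.hom, by
    show lT (M := M) (S := S) f.hom ∘ₗ LinearMap.id = LinearMap.id ∘ₗ _
    (try simp) <;> rfl⟩
  map_id X := by
    apply TriModHom.ext
    · rfl
    · exact lT_id
  map_comp {X X' X''} f g := by
    apply TriModHom.ext <;> dsimp only [comp_f, comp_g]
    · rfl
    · show lT (M := M) (S := S) (g.hom ∘ₗ f.hom) = _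
      rw [lT_comp]
      rfl

/-- The evaluation functor `e² : Mod Γ → Mod S`, `(X,Y)_φ ↦ Y`. -/
noncomputable def ev2 : TriMod R S M ⥤ ModuleCat S where
  obj A := ModuleCat.of S A.Y
  map u := ModuleCat.ofHom u.g
  map_id A := rfl
  map_comp u v := rfl

/-- The functor `e²_λ : Mod S → Mod Γ`, `Y ↦ (0, Y)_0`. -/
noncomputable def e2fun : ModuleCat S ⥤ TriMod R S M where
  obj Y := e2obj R S M Y
  map {Y Y'} g := ⟨LinearMap.id, g.hom, by
    show g.hom ∘ₗ (0 : (M ⊗[R] PUnit) →ₗ[S] Y) = _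
    (try simp [e2obj]) <;> rfl⟩
  map_id Y := by apply TriModHom.ext <;> rfl
  map_comp f g := by
    apply TriModHom.ext
    · show LinearMap.id ∘ₗ LinearMap.id = (LinearMap.id : PUnit →ₗ[R] PUnit)
      simp
    · rfl

/-- The functor `e²_ρ : Mod S → Mod Γ`, `Y ↦ (Hom_S(M,Y), Y)_1`. -/
noncomputable def e2rhoFun : ModuleCat S ⥤ TriMod R S M where
  obj Y := e2rhoObj R S M Y
  map {Y Y'} g := ⟨hT g.hom, g.hom, by
    apply LinearMap.ext; intro t
    induction t using TensorProduct.induction_on with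
    | zero => simp
    | tmul m f => rfl
    | add a b ha hb => simp only [map_add, ha, hb]⟩
  map_id Y := by
    apply TriModHom.ext <;> dsimp only [id_f, id_g]
    · apply LinearMap.ext; intro f; apply LinearMap.ext; intro m; rfl
    · rfl
  map_comp f g := by
    apply TriModHom.ext <;> dsimp only [comp_f, comp_g]
    · apply LinearMap.ext; intro u; apply LinearMap.ext; intro m; rfl
    · rfl

end Functors

section Props
open CategoryTheory Limits
variable {R S M : Type} [CommRing R] [CommRing S]
  [AddCommGroup M] [Module R M] [Module S M] [SMulCommClass R S M]

/-- `Ext¹_Γ(P, A) = 0`: every extension `0 → A → D → P → 0` of Γ-modules splits. -/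
def TriExt1Vanishes (P A : TriMod R S M) : Prop :=
  ∀ (D : TriMod R S M) (i : A ⟶ D) (p : D ⟶ P) (w : i ≫ p = 0), Epi p →
    Nonempty (IsLimit (KernelFork.ofι i w)) → ∃ s : P ⟶ D, s ≫ p = 𝟙 P

/-- `A ∈ GProj(Γ)ᗮ`. -/
def TriMemGProjPerp (A : TriMod R S M) : Prop :=
  ∀ G : TriMod R S M, IsGorensteinProjective G → TriExt1Vanishes G A

/-- `A ∈ ᗮGInj(Γ)`. -/
def TriMemPerpGInj (A : TriMod R S M) : Prop :=
  ∀ G : TriMod R S M, IsGorensteinInjective G → TriExt1Vanishes A G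

variable (R S M) in
/-- `Γ` is virtually Gorenstein: `GProj(Γ)ᗮ = ᗮGInj(Γ)`. -/
def TriVirtuallyGorenstein : Prop :=
  ∀ A : TriMod R S M, TriMemGProjPerp A ↔ TriMemPerpGInj A

/-- A ring `A` is virtually Gorenstein: `GProj(A)ᗮ = ᗮGInj(A)`. -/
def RingVirtuallyGorenstein (A : Type) [Ring A] : Prop :=
  ∀ (N : Type) [AddCommGroup N] [Module A N],
    (∀ (G : Type) [AddCommGroup G] [Module A G],
        ModGorensteinProjective A G → Ext1Vanishes A G N) ↔
    (∀ (G : Type) [AddCommGroup G] [Module A G],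
        ModGorensteinInjective A G → Ext1Vanishes A N G)

/-- An object of a category with zero morphisms is indecomposable: it is nonzero and its
only idempotent endomorphisms are `0` and the identity. -/
def Indec {C : Type u} [Category.{v} C] [Limits.HasZeroMorphisms C] (A : C) : Prop :=
  ¬ IsZero A ∧ ∀ e : A ⟶ A, e ≫ e = e → e = 0 ∨ e = 𝟙 A

/-- A Γ-module is finitely generated iff both components are. -/
def TriFG (A : TriMod R S M) : Prop := Module.Finite R A.X ∧ Module.Finite S A.Y

variable (R S M) in
/-- `Γ` is of finite Cohen-Macaulay type. -/
def TriCMFinite : Prop :=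
  ∃ (n : ℕ) (rep : Fin n → TriMod R S M),
    ∀ A : TriMod R S M, TriFG A → Indec A → IsGorensteinProjective A →
      ∃ i : Fin n, Nonempty (A ≅ rep i)

variable (R S M) in
/-- `Γ` is Cohen-Macaulay free. -/
def TriCMFree : Prop :=
  ∀ A : TriMod R S M, TriFG A → IsGorensteinProjective A → Projective A

/-- A ring is of finite Cohen-Macaulay type: up to isomorphism, only finitely many
indecomposable finitely generated Gorenstein projective modules. -/
def RingCMFinite (A : Type) [Ring A] : Prop :=
  ∃ (n : ℕ) (rep : Fin n → ModuleCat.{0} A),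
    ∀ N : ModuleCat.{0} A, Module.Finite A N → Indec N → IsGorensteinProjective N →
      ∃ i : Fin n, Nonempty (N ≅ rep i)

/-- A ring is Cohen-Macaulay free: every finitely generated Gorenstein projective module
is projective. -/
def RingCMFree (A : Type) [Ring A] : Prop :=
  ∀ (N : Type) [AddCommGroup N] [Module A N],
    Module.Finite A N → ModGorensteinProjective A N → Module.Projective A N

end Props


/-!
`e²_λ` has the left adjoint `(X, Y)_φ ↦ Y / im φ` and the right adjoint
`e² : (X, Y)_φ ↦ Y`, which in turn has the right adjoint `e²_ρ`. Hence `e²_λ` is fully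
faithful and exact, and it preserves and reflects projectives; so `E'` and `e²_λ(E')` are
together acyclic complexes of projectives. By adjunction `Hom_Γ(e²_λ E', P) ≅ Hom_S(E', P.Y)`,
and for a projective Γ-module `P`, `P.Y` is a direct summand of `(M ⊗_R R^(X)) ⊕ S^(Y)`, where
`M ⊗_R R^(X) ≅ M^(X) ∈ Add(M)`. The functor `Hom_S(E', -)` is exact on projectives by total
acyclicity, and on `Add(M)` because `Ext¹` from the Gorenstein projective syzygies of `E'`
into `Add(M)` vanishes.
-/

section TotallyAcyclic
open CategoryTheory Limits
variable {C : Type*} [Category C] [HasZeroMorphisms C]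

def HomExact (E : ChainComplex C ℤ) (P : C) : Prop :=
  ∀ (i : ℤ) (g : E.X i ⟶ P), E.d (i + 1) i ≫ g = 0 →
    ∃ h : E.X (i - 1) ⟶ P, E.d i (i - 1) ≫ h = g

lemma HomExact.exists_comp_eq {E : ChainComplex C ℤ} {P : C} (hP : HomExact E P)
    {i j k : ℤ} (hj : j = i + 1) (hk : k = i - 1) (g : E.X i ⟶ P) (hg : E.d j i ≫ g = 0) :
    ∃ h : E.X k ⟶ P, E.d i k ≫ h = g := by
  subst hj hk
  exact hP i g hg

lemma HomExact.of_retract {E : ChainComplex C ℤ} {P P' : C} (hP : HomExact E P)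
    (r : Retract P' P) : HomExact E P' := by
  intro i g hg
  obtain ⟨h, hh⟩ := hP i (g ≫ r.i) (by rw [reassoc_of% hg, zero_comp])
  exact ⟨h ≫ r.r, by rw [reassoc_of% hh, r.retract, Category.comp_id]⟩

lemma CategoryTheory.Adjunction.homEquiv_eq_zero_iff {D : Type*} [Category D]
    [HasZeroMorphisms D] {F : C ⥤ D} {G : D ⥤ C} (adj : F ⊣ G) {X : C} {P : D}
    (g : F.obj X ⟶ P) : adj.homEquiv X P g = 0 ↔ g = 0 := by
  have h0 : adj.homEquiv X P 0 = 0 :=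
    calc adj.homEquiv X P 0 = adj.homEquiv X P (F.map (0 : X ⟶ X) ≫ 0) := by rw [comp_zero]
      _ = 0 := by rw [adj.homEquiv_naturality_left, zero_comp]
  rw [← h0, Equiv.apply_eq_iff_eq]

lemma CategoryTheory.Adjunction.homExact_map_iff {D : Type*} [Category D]
    [HasZeroMorphisms D] {F : C ⥤ D} {G : D ⥤ C} [F.PreservesZeroMorphisms] (adj : F ⊣ G)
    (E : ChainComplex C ℤ) (P : D) :
    HomExact ((F.mapHomologicalComplex _).obj E) P ↔ HomExact E (G.obj P) := by
  refine forall_congr' fun i => (adj.homEquiv (E.X i) P).forall_congr fun {g} => ?_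
  change F.map _ ≫ g = 0 → (∃ h : F.obj _ ⟶ P, F.map _ ≫ h = g) ↔ _
  refine imp_congr ?_ ((adj.homEquiv _ P).exists_congr fun {h} => ?_)
  · rw [← adj.homEquiv_eq_zero_iff, adj.homEquiv_naturality_left]
  · rw [← adj.homEquiv_naturality_left, Equiv.apply_eq_iff_eq]

def shiftComplex (E : ChainComplex C ℤ) (c : ℤ) : ChainComplex C ℤ where
  X j := E.X (j + c)
  d a b := E.d (a + c) (b + c)
  shape a b h := E.shape _ _ (by simp only [ComplexShape.down_Rel] at h ⊢; omega)

lemma exactAt_shiftComplex_iff (E : ChainComplex C ℤ) (c i : ℤ) :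
    (shiftComplex E c).ExactAt i ↔ E.ExactAt (i + c) := by
  rw [HomologicalComplex.exactAt_iff' _ (i + 1) i (i - 1) (by simp) (by simp),
    HomologicalComplex.exactAt_iff' E (i + 1 + c) (i + c) (i - 1 + c)
      (by simp only [ChainComplex.prev]; omega) (by simp only [ChainComplex.next]; omega)]
  rfl

lemma IsTotallyAcyclic.shiftComplex {E : ChainComplex C ℤ} (hE : IsTotallyAcyclic E) (c : ℤ) :
    IsTotallyAcyclic (shiftComplex E c) := by
  obtain ⟨hproj, hexact, hhom⟩ := hE
  refine ⟨fun i => hproj (i + c), fun i => (exactAt_shiftComplex_iff E c i).2 (hexact _),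
    fun P hP i g hg => ?_⟩
  exact HomExact.exists_comp_eq (hhom P hP) (by ring) (by ring) g hg

lemma exists_isLimit_kernelFork_of_eq {E : ChainComplex C ℤ} {G : C} {b k b' k' : ℤ}
    (hb : b = b') (hk : k = k') (ι : G ⟶ E.X b) (w : ι ≫ E.d b k = 0)
    (hι : IsLimit (KernelFork.ofι ι w)) :
    ∃ (ι' : G ⟶ E.X b') (w' : ι' ≫ E.d b' k' = 0),
      Nonempty (IsLimit (KernelFork.ofι ι' w')) := by
  subst hb hk
  exact ⟨ι, w, ⟨hι⟩⟩

-- Degree `0` of the shifted complex is `E.X (0 + b)`, which is `E.X b` only propositionally.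
lemma IsTotallyAcyclic.isGorensteinProjective_of_isLimit {E : ChainComplex C ℤ}
    (hE : IsTotallyAcyclic E) {G : C} {b : ℤ} (ι : G ⟶ E.X b) (w : ι ≫ E.d b (b - 1) = 0)
    (hι : IsLimit (KernelFork.ofι ι w)) : IsGorensteinProjective G :=
  ⟨_root_.shiftComplex E b, hE.shiftComplex b,
    exists_isLimit_kernelFork_of_eq (b' := 0 + b) (k' := -1 + b) (by ring) (by ring) ι w hι⟩

end TotallyAcyclic

section Pushout
variable {S : Type} [Ring S] {A E N : Type} [AddCommGroup A] [Module S A] [AddCommGroup E]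
  [Module S E] [AddCommGroup N] [Module S N] (d : A →ₗ[S] E) (g : A →ₗ[S] N)

abbrev PushoutModule : Type := (N × E) ⧸ LinearMap.range (g.prod (-d))

namespace PushoutModule

noncomputable def inl : N →ₗ[S] PushoutModule d g :=
  (LinearMap.range (g.prod (-d))).mkQ ∘ₗ LinearMap.inl S N E

noncomputable def inr : E →ₗ[S] PushoutModule d g :=
  (LinearMap.range (g.prod (-d))).mkQ ∘ₗ LinearMap.inr S N E

lemma inr_comp : inr d g ∘ₗ d = inl d g ∘ₗ g := by
  ext a
  refine ((LinearMap.range (g.prod (-d))).mkQ_apply _).trans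
    (Eq.symm <| (Submodule.Quotient.eq _).2 ⟨a, ?_⟩)
  simp

lemma inl_injective (hg : LinearMap.ker d ≤ LinearMap.ker g) :
    Function.Injective (inl d g) := by
  refine (injective_iff_map_eq_zero _).2 fun n hn => ?_
  obtain ⟨a, ha⟩ := (Submodule.Quotient.mk_eq_zero _).1 hn
  have hda : d a = 0 := by simpa using congrArg Prod.snd ha
  have hga : g a = n := by simpa using congrArg Prod.fst ha
  rw [← hga]
  exact hg hda

variable {G : Type} [AddCommGroup G] [Module S G] {d} (p : E →ₗ[S] G)

noncomputable def desc (hp : p ∘ₗ d = 0) : PushoutModule d g →ₗ[S] G :=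
  (LinearMap.range (g.prod (-d))).liftQ (p ∘ₗ LinearMap.snd S N E) (by
    rintro _ ⟨a, rfl⟩
    simpa using LinearMap.congr_fun hp a)

lemma desc_surjective (hp : p ∘ₗ d = 0) (hps : Function.Surjective p) :
    Function.Surjective (desc g p hp) := by
  intro x
  obtain ⟨e, rfl⟩ := hps x
  exact ⟨inr d g e, rfl⟩

lemma exact_inl_desc (hdp : Function.Exact d p) :
    Function.Exact (inl d g) (desc g p hdp.linearMap_comp_eq_zero) := by
  intro y
  obtain ⟨⟨n, e⟩, rfl⟩ := Submodule.Quotient.mk_surjective _ y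
  refine ⟨fun hy => ?_, ?_⟩
  · obtain ⟨a, rfl⟩ := (hdp e).1 hy
    refine ⟨n + g a, (Submodule.Quotient.eq _).2 ⟨a, ?_⟩⟩
    simp
  · rintro ⟨n', hn'⟩
    rw [← hn']
    simp [inl, desc]

end PushoutModule

-- The pushout of `d` and `g` is an extension of `G` by `N`; a retraction of it extends `g`.
lemma exists_comp_eq_of_ext1Vanishes {G : Type} [AddCommGroup G] [Module S G]
    {d : A →ₗ[S] E} {p : E →ₗ[S] G} (hdp : Function.Exact d p) (hp : Function.Surjective p)
    (hN : Ext1Vanishes S G N) (g : A →ₗ[S] N) (hg : LinearMap.ker d ≤ LinearMap.ker g) :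
    ∃ h : E →ₗ[S] N, h ∘ₗ d = g := by
  have hexact := PushoutModule.exact_inl_desc g p hdp
  have hinj := PushoutModule.inl_injective d g hg
  have hsurj := PushoutModule.desc_surjective g p hdp.linearMap_comp_eq_zero hp
  obtain ⟨s, hs⟩ := hN _ _ _ hinj hsurj hexact
  have hsplit := (hexact.split_tfae hinj hsurj).out 0 1
  obtain ⟨r, hr⟩ := hsplit.mp ⟨s, hs⟩
  refine ⟨r ∘ₗ PushoutModule.inr d g, ?_⟩
  rw [LinearMap.comp_assoc, PushoutModule.inr_comp, ← LinearMap.comp_assoc, hr,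
    LinearMap.id_comp]

end Pushout

section ModuleComplexes
open CategoryTheory Limits
variable {S : Type} [Ring S] {E : ChainComplex (ModuleCat S) ℤ}

lemma range_d_eq_ker_d {i j k : ℤ} (h : E.ExactAt j) (hi : i = j + 1) (hk : k = j - 1) :
    LinearMap.range (E.d i j).hom = LinearMap.ker (E.d j k).hom := by
  subst hi hk
  rw [HomologicalComplex.exactAt_iff' E (j + 1) j (j - 1) (by simp) (by simp),
    ShortComplex.moduleCat_exact_iff_range_eq_ker] at h
  exact h

lemma range_d_le_ker_d (i j k : ℤ) :
    LinearMap.range (E.d i j).hom ≤ LinearMap.ker (E.d j k).hom := by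
  rintro _ ⟨x, rfl⟩
  rw [LinearMap.mem_ker, ← LinearMap.comp_apply, ← ModuleCat.hom_comp, E.d_comp_d]
  rfl

lemma IsTotallyAcyclic.modGorensteinProjective_range (hE : IsTotallyAcyclic E) (j : ℤ) :
    ModGorensteinProjective S (LinearMap.range (E.d j (j - 1)).hom) := by
  let T : ShortComplex (ModuleCat S) :=
    ShortComplex.mk (ModuleCat.ofHom (LinearMap.range (E.d j (j - 1)).hom).subtype)
      (E.d (j - 1) (j - 1 - 1)) (by
        ext ⟨_, hx⟩
        exact range_d_le_ker_d j (j - 1) (j - 1 - 1) hx)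
  have hT : T.Exact := by
    rw [ShortComplex.moduleCat_exact_iff_range_eq_ker]
    exact (Submodule.range_subtype _).trans (range_d_eq_ker_d (hE.2.1 (j - 1)) (by ring) rfl)
  have : Mono T.f := (ModuleCat.mono_iff_injective _).2 Subtype.val_injective
  exact hE.isGorensteinProjective_of_isLimit T.f T.zero hT.fIsKernel

lemma homExact_of_ext1Vanishes (hE : ∀ i, E.ExactAt i) {N : Type} [AddCommGroup N] [Module S N]
    (hN : ∀ j, Ext1Vanishes S (LinearMap.range (E.d j (j - 1)).hom) N) :
    HomExact E (ModuleCat.of S N) := by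
  intro i g hg
  have hdp :
      Function.Exact (E.d i (i - 1)).hom (E.d (i - 1) (i - 1 - 1)).hom.rangeRestrict := by
    rw [LinearMap.exact_iff, LinearMap.ker_rangeRestrict]
    exact (range_d_eq_ker_d (hE (i - 1)) (by ring) rfl).symm
  have hg' : LinearMap.ker (E.d i (i - 1)).hom ≤ LinearMap.ker g.hom := by
    rw [← range_d_eq_ker_d (hE i) rfl rfl]
    rintro _ ⟨x, rfl⟩
    rw [LinearMap.mem_ker, ← LinearMap.comp_apply, ← ModuleCat.hom_comp, hg]
    rfl
  obtain ⟨h, hh⟩ := exists_comp_eq_of_ext1Vanishes hdp (LinearMap.surjective_rangeRestrict _)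
    (hN (i - 1)) g.hom hg'
  exact ⟨ModuleCat.ofHom h, ModuleCat.hom_ext hh⟩

lemma homExact_prod {N₁ N₂ : Type} [AddCommGroup N₁] [Module S N₁] [AddCommGroup N₂]
    [Module S N₂] (h₁ : HomExact E (ModuleCat.of S N₁))
    (h₂ : HomExact E (ModuleCat.of S N₂)) :
    HomExact E (ModuleCat.of S (N₁ × N₂)) := by
  intro i g hg
  obtain ⟨u₁, hu₁⟩ := h₁ i (g ≫ ModuleCat.ofHom (LinearMap.fst S N₁ N₂))
    (by rw [reassoc_of% hg, zero_comp])
  obtain ⟨u₂, hu₂⟩ := h₂ i (g ≫ ModuleCat.ofHom (LinearMap.snd S N₁ N₂))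
    (by rw [reassoc_of% hg, zero_comp])
  refine ⟨ModuleCat.ofHom (u₁.hom.prod u₂.hom), ?_⟩
  ext x
  · exact congrArg (fun f => f.hom x) hu₁
  · exact congrArg (fun f => f.hom x) hu₂

end ModuleComplexes

section TriangularModules
open Limits

instance {Y : Type} [AddCommGroup Y] [Module S Y] : Subsingleton (e2obj R S M Y).X :=
  inferInstanceAs (Subsingleton PUnit)

lemma e2obj_hom_ext {Y : Type} [AddCommGroup Y] [Module S Y] {A : TriMod R S M}
    {u v : e2obj R S M Y ⟶ A} (h : u.g = v.g) : u = v :=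
  TriModHom.ext (LinearMap.ext fun x => by rw [Subsingleton.elim x 0, map_zero, map_zero]) h

lemma hom_e2obj_ext {Y : Type} [AddCommGroup Y] [Module S Y] {A : TriMod R S M}
    {u v : A ⟶ e2obj R S M Y} (h : u.g = v.g) : u = v :=
  TriModHom.ext (LinearMap.ext fun _ => Subsingleton.elim _ _) h

noncomputable def e2objDesc {Y : Type} [AddCommGroup Y] [Module S Y] {A : TriMod R S M}
    (g : Y →ₗ[S] A.Y) : e2obj R S M Y ⟶ A :=
  ⟨0, g, by
    show g ∘ₗ 0 = A.phi ∘ₗ lT 0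
    rw [lT_zero, LinearMap.comp_zero, LinearMap.comp_zero]⟩

noncomputable def e2objLift {Y : Type} [AddCommGroup Y] [Module S Y] {A : TriMod R S M}
    (g : A.Y →ₗ[S] Y) (hg : g ∘ₗ A.phi = 0) : A ⟶ e2obj R S M Y :=
  ⟨0, g, by
    show g ∘ₗ A.phi = 0 ∘ₗ lT 0
    rw [hg, LinearMap.zero_comp]⟩

variable (R S M) in
noncomputable def e2funFullyFaithful : (e2fun R S M).FullyFaithful where
  preimage u := ModuleCat.ofHom u.g
  map_preimage _ := e2obj_hom_ext rfl

instance : (e2fun R S M).Full := (e2funFullyFaithful R S M).full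
instance : (e2fun R S M).Faithful := (e2funFullyFaithful R S M).faithful

instance : (e2fun R S M).PreservesZeroMorphisms where
  map_zero _ _ := e2obj_hom_ext rfl

variable (R S M) in
noncomputable def e2funAdjunction : e2fun R S M ⊣ ev2 R S M :=
  Adjunction.mkOfHomEquiv
    { homEquiv := fun _ _ =>
        { toFun := fun u => ModuleCat.ofHom u.g
          invFun := fun g => e2objDesc g.hom
          left_inv := fun _ => e2obj_hom_ext rfl
          right_inv := fun _ => rfl }
      homEquiv_naturality_left_symm := fun _ _ => e2obj_hom_ext rfl
      homEquiv_naturality_right := fun _ _ => rfl }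

noncomputable def cokerHomEquiv (A : TriMod R S M) (Y : ModuleCat S) :
    (ModuleCat.of S (A.Y ⧸ LinearMap.range A.phi) ⟶ Y) ≃ (A ⟶ (e2fun R S M).obj Y) where
  toFun g := e2objLift (g.hom ∘ₗ (LinearMap.range A.phi).mkQ) (by
    rw [LinearMap.comp_assoc, LinearMap.range_mkQ_comp, LinearMap.comp_zero])
  invFun u := ModuleCat.ofHom ((LinearMap.range A.phi).liftQ u.g (by
    rintro _ ⟨t, rfl⟩
    exact LinearMap.congr_fun u.comm t))
  left_inv _ := ModuleCat.hom_ext (Submodule.linearMap_qext _ rfl)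
  right_inv _ := hom_e2obj_ext rfl

instance : (e2fun R S M).IsRightAdjoint :=
  ⟨_, ⟨Adjunction.adjunctionOfEquivLeft cokerHomEquiv fun _ _ _ _ _ => hom_e2obj_ext rfl⟩⟩

instance : (e2fun R S M).PreservesHomology where
  preservesKernels _ _ _ :=
    have := (Adjunction.ofIsRightAdjoint (e2fun R S M)).rightAdjoint_preservesLimits.{0, 0}
    inferInstance
  preservesCokernels _ _ _ :=
    have := (e2funAdjunction R S M).leftAdjoint_preservesColimits.{0, 0}
    inferInstance

lemma tensor_linearMap_ext {X Y : Type} [AddCommGroup X] [Module R X] [AddCommGroup Y]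
    [Module S Y] {f f' : M ⊗[R] X →ₗ[S] Y} (h : ∀ m x, f (m ⊗ₜ x) = f' (m ⊗ₜ x)) :
    f = f' :=
  LinearMap.ext fun t => t.induction_on (by simp only [map_zero]) h
    fun _ _ h₁ h₂ => by rw [map_add, map_add, h₁, h₂]

variable (S M) in
noncomputable def tmulRight {X : Type} [AddCommGroup X] [Module R X] (x : X) :
    M →ₗ[S] M ⊗[R] X where
  toFun m := m ⊗ₜ x
  map_add' m m' := TensorProduct.add_tmul m m' x
  map_smul' s m := (TensorProduct.smul_tmul' s m x).symm

noncomputable def transposeHom (A : TriMod R S M) {Y : Type} [AddCommGroup Y] [Module S Y]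
    (g : A.Y →ₗ[S] Y) : A.X →ₗ[R] (M →ₗ[S] Y) where
  toFun x := g ∘ₗ A.phi ∘ₗ tmulRight S M x
  map_add' x x' := by ext m; simp [tmulRight, TensorProduct.tmul_add]
  map_smul' r x := by ext m; simp [tmulRight, TensorProduct.smul_tmul]

variable (R S M) in
noncomputable def ev2Adjunction : ev2 R S M ⊣ e2rhoFun R S M :=
  Adjunction.mkOfHomEquiv
    { homEquiv := fun A _ =>
        { toFun := fun g => ⟨transposeHom A g.hom, g.hom, tensor_linearMap_ext fun _ _ => rfl⟩
          invFun := fun u => ModuleCat.ofHom u.g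
          left_inv := fun _ => rfl
          right_inv := fun u => TriModHom.ext
            (LinearMap.ext fun x => LinearMap.ext fun m => LinearMap.congr_fun u.comm (m ⊗ₜ x))
            rfl }
      homEquiv_naturality_left_symm := fun _ _ => rfl
      homEquiv_naturality_right := fun _ _ => rfl }

lemma projective_e2fun_obj_iff (P : ModuleCat S) :
    Projective ((e2fun R S M).obj P) ↔ Projective P :=
  have : (ev2 R S M).PreservesEpimorphisms :=
    Functor.preservesEpimorphisms_of_adjunction (ev2Adjunction R S M)
  ⟨(e2funAdjunction R S M).projective_of_map_projective P,
    (e2funAdjunction R S M).map_projective P⟩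

lemma e2c_eq_mapHomologicalComplex (E : ChainComplex (ModuleCat S) ℤ) :
    e2c R S M E = ((e2fun R S M).mapHomologicalComplex _).obj E :=
  HomologicalComplex.ext rfl fun i j _ => by
    change (e2c R S M E).d i j ≫ 𝟙 _ = 𝟙 _ ≫ (e2fun R S M).map (E.d i j)
    rw [Category.comp_id, Category.id_comp]
    exact e2obj_hom_ext rfl

lemma e2c_exactAt_iff (E : ChainComplex (ModuleCat S) ℤ) (i : ℤ) :
    (e2c R S M E).ExactAt i ↔ E.ExactAt i := by
  rw [e2c_eq_mapHomologicalComplex]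
  exact (E.sc i).exact_map_iff_of_faithful (e2fun R S M)

lemma memAdd_tensor_finsupp (I : Type) : MemAdd S M (M ⊗[R] (I →₀ R)) := by
  classical
  let e := TensorProduct.finsuppScalarRight R R M I
  have he : ∀ (s : S) (t : M ⊗[R] (I →₀ R)), e (s • t) = s • e t := fun s t => by
    induction t using TensorProduct.induction_on with
    | zero => simp
    | tmul m f =>
      ext i
      simp [e, TensorProduct.smul_tmul', smul_comm (f i) s m]
    | add t t' ht ht' => simp only [smul_add, map_add, ht, ht']
  let eS : M ⊗[R] (I →₀ R) ≃ₗ[S] (I →₀ M) := { e.toAddEquiv with map_smul' := he }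
  exact ⟨I, eS.toLinearMap, eS.symm.toLinearMap, by ext; simp⟩

lemma epi_of_surjective {A B : TriMod R S M} (u : A ⟶ B) (hf : Function.Surjective u.f)
    (hg : Function.Surjective u.g) : Epi u :=
  ⟨fun _ _ h => TriModHom.ext ((LinearMap.cancel_right hf).1 (congrArg TriModHom.f h))
    ((LinearMap.cancel_right hg).1 (congrArg TriModHom.g h))⟩

/-- The free Γ-module `e¹_λ(R^(X)) ⊕ e²_λ(S^(Y))` mapping onto `(X, Y)_φ`. -/
noncomputable def freeCover (P : TriMod R S M) : TriMod R S M :=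
  ⟨P.X →₀ R, (M ⊗[R] (P.X →₀ R)) × (P.Y →₀ S), LinearMap.inl S _ _⟩

noncomputable def freeCoverπ (P : TriMod R S M) : freeCover P ⟶ P :=
  ⟨Finsupp.linearCombination R id,
    (P.phi ∘ₗ lT (Finsupp.linearCombination R id)).coprod (Finsupp.linearCombination S id),
    LinearMap.coprod_inl _ _⟩

instance (P : TriMod R S M) : Epi (freeCoverπ P) :=
  epi_of_surjective _ (Finsupp.linearCombination_id_surjective R P.X) fun y =>
    ⟨(0, Finsupp.single y 1), by
      show P.phi (lT _ 0) + Finsupp.linearCombination S id (Finsupp.single y 1) = y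
      simp⟩

lemma homExact_of_memAdd {E : ChainComplex (ModuleCat S) ℤ} (hE : IsTotallyAcyclic E)
    (h2 : Cond2 S M) {N : Type} [AddCommGroup N] [Module S N] (hN : MemAdd S M N) :
    HomExact E (ModuleCat.of S N) :=
  homExact_of_ext1Vanishes hE.2.1 fun j => h2 N hN _ (hE.modGorensteinProjective_range j)

lemma homExact_ev2_obj {E : ChainComplex (ModuleCat S) ℤ} (hE : IsTotallyAcyclic E)
    (h2 : Cond2 S M) {P : TriMod R S M} (hP : Projective P) :
    HomExact E ((ev2 R S M).obj P) := by
  have hfree : HomExact E ((ev2 R S M).obj (freeCover P)) :=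
    homExact_prod (homExact_of_memAdd hE h2 (memAdd_tensor_finsupp P.X))
      (hE.2.2 _ ((IsProjective.iff_projective _).1 inferInstance))
  exact hfree.of_retract
    (Retract.map ⟨Projective.factorThru (𝟙 P) (freeCoverπ P), freeCoverπ P,
      Projective.factorThru_comp _ _⟩ (ev2 R S M))

end TriangularModules

section Statement
open CategoryTheory Limits
variable {R S M : Type} [CommRing R] [CommRing S]
  [AddCommGroup M] [Module R M] [Module S M] [SMulCommClass R S M]

theorem totallyAcyclic_iff_e2c_general (h2 : Cond2 S M) (E' : ChainComplex (ModuleCat S) ℤ) :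
    IsTotallyAcyclic E' ↔ IsTotallyAcyclic (e2c R S M E') := by
  have hhom : ∀ P, HomExact (e2c R S M E') P ↔ HomExact E' ((ev2 R S M).obj P) := fun P => by
    rw [e2c_eq_mapHomologicalComplex, (e2funAdjunction R S M).homExact_map_iff]
  constructor
  · intro hE
    exact ⟨fun i => (projective_e2fun_obj_iff _).2 (hE.1 i),
      fun i => (e2c_exactAt_iff E' i).2 (hE.2.1 i),
      fun P hP => (hhom P).2 (homExact_ev2_obj hE h2 hP)⟩
  · rintro ⟨hproj, hexact, hlift⟩
    exact ⟨fun i => (projective_e2fun_obj_iff _).1 (hproj i),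
      fun i => (e2c_exactAt_iff E' i).1 (hexact i),
      fun P hP => (hhom _).1 (hlift _ ((projective_e2fun_obj_iff P).2 hP))⟩

/-- If `Add(M) ⊆ GProj(S)ᗮ`, then a complex `E'` of projective `S`-modules is totally
acyclic iff `e²_λ(E')` is a totally acyclic complex of projective Γ-modules. -/
theorem totallyAcyclic_iff_e2c (h2 : Cond2 S M) (E' : ChainComplex (ModuleCat S) ℤ)
    (hproj : ∀ i, Module.Projective S (E'.X i)) :
    IsTotallyAcyclic E' ↔ IsTotallyAcyclic (e2c R S M E') :=
  totallyAcyclic_iff_e2c_general h2 E'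

end Statement
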